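/- arXiv:2302.06915 — 3 statements merged into one kernel-verified Lean document; each statement's English description precedes it below -/
import Mathlib

section
/- Two-variable Grönwall inequality: if f and g are nonnegative continuous functions on the rectangle U = [0,x₀]×[0,y₀] and there exist constants J, c₁, c₂ ≥ 0 such that f(x,y) + g(x,y) ≤ J + c₁ ∫₀ˣ f(x',y) dx' + c₂ ∫₀ʸ g(x,y') dy' for all (x,y) ∈ U, then f(x,y) + g(x,y) ≤ J · exp(c₁ x + c₂ y) for all (x,y) ∈ U. -/
open Set MeasureTheory intervalIntegral

/-- Fubini for continuous functions on a rectangle, interval-integral form. -/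
lemma tvg_swap {F : ℝ → ℝ → ℝ} (hF : Continuous fun p : ℝ × ℝ => F p.1 p.2)
    {X y : ℝ} (hX : 0 ≤ X) (hy : 0 ≤ y) :
    (∫ x in (0:ℝ)..X, ∫ t in (0:ℝ)..y, F x t) = ∫ t in (0:ℝ)..y, ∫ x in (0:ℝ)..X, F x t := by
  have hint : Integrable (Function.uncurry F)
      ((volume.restrict (Ioc (0:ℝ) X)).prod (volume.restrict (Ioc (0:ℝ) y))) := by
    rw [Measure.prod_restrict, ← Measure.volume_eq_prod]
    have h1 : IntegrableOn (Function.uncurry F) (Icc (0:ℝ) X ×ˢ Icc (0:ℝ) y) volume :=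
      (hF.continuousOn (s := Icc (0:ℝ) X ×ˢ Icc (0:ℝ) y)).integrableOn_compact
        (isCompact_Icc.prod isCompact_Icc)
    exact h1.mono_set (Set.prod_mono Ioc_subset_Icc_self Ioc_subset_Icc_self)
  have := MeasureTheory.integral_integral_swap hint
  simpa only [intervalIntegral.integral_of_le hX, intervalIntegral.integral_of_le hy] using this

/-- Main lemma, assuming global continuity / nonnegativity. -/
lemma tvg_aux
    (x₀ y₀ J a b : ℝ) (hx₀ : 0 ≤ x₀) (hy₀ : 0 ≤ y₀)
    (hJ : 0 ≤ J) (ha : 0 ≤ a) (hb : 0 ≤ b)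
    (f g : ℝ → ℝ → ℝ)
    (hf : Continuous fun p : ℝ × ℝ => f p.1 p.2)
    (hg : Continuous fun p : ℝ × ℝ => g p.1 p.2)
    (hf0 : ∀ x y, 0 ≤ f x y) (hg0 : ∀ x y, 0 ≤ g x y)
    (hineq : ∀ x ∈ Icc (0:ℝ) x₀, ∀ y ∈ Icc (0:ℝ) y₀,
      f x y + g x y ≤ J + a * (∫ x' in (0:ℝ)..x, f x' y) + b * (∫ y' in (0:ℝ)..y, g x y')) :
    ∀ X ∈ Icc (0:ℝ) x₀, ∀ Y ∈ Icc (0:ℝ) y₀,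
      f X Y + g X Y ≤ J * Real.exp (a * X + b * Y) := by
  intro X hXm Y hYm
  obtain ⟨hX0, hXx⟩ := hXm
  obtain ⟨hY0, hYy⟩ := hYm
  set E : ℝ → ℝ := fun x => Real.exp (a * (X - x)) with hEdef
  have hEc : Continuous E := by
    apply Real.continuous_exp.comp
    fun_prop
  have hE0 : ∀ x, 0 < E x := fun x => Real.exp_pos _
  -- the weighted function v
  set v : ℝ → ℝ := fun t => g X t + ∫ x in (0:ℝ)..X, a * (E x * g x t) with hvdef
  have hgXc : Continuous fun t => g X t := hg.comp (Continuous.prodMk_right X)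
  have hvc : Continuous v := by
    apply hgXc.add
    have : Continuous (Function.uncurry fun (t x : ℝ) => a * (E x * g x t)) := by
      apply continuous_const.mul
      exact (hEc.comp continuous_snd).mul (hg.comp (continuous_snd.prodMk continuous_fst))
    exact continuous_parametric_intervalIntegral_of_continuous' this 0 X
  have hv0 : ∀ t, 0 ≤ v t := by
    intro t
    have : 0 ≤ ∫ x in (0:ℝ)..X, a * (E x * g x t) :=
      intervalIntegral.integral_nonneg hX0
        (fun x _ => mul_nonneg ha (mul_nonneg (hE0 x).le (hg0 x t)))
    have := hg0 X t
    simp only [hvdef]; linarith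
  -- Claim 1
  have claim1 : ∀ y ∈ Icc (0:ℝ) y₀,
      f X y + v y ≤ J * Real.exp (a * X) + b * ∫ t in (0:ℝ)..y, v t := by
    intro y hy
    have hfyc : Continuous fun s => f s y :=
      hf.comp (continuous_id.prodMk continuous_const)
    have hgyc : Continuous fun s => g s y :=
      hg.comp (continuous_id.prodMk continuous_const)
    set F : ℝ → ℝ := fun x => ∫ s in (0:ℝ)..x, f s y with hFdef
    set G : ℝ → ℝ := fun x => ∫ t in (0:ℝ)..y, g x t with hGdef
    have hFc : Continuous F :=
      intervalIntegral.continuous_primitive (fun _ _ => hfyc.intervalIntegrable _ _) 0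
    have hGc : Continuous G := by
      have : Continuous (Function.uncurry fun (x t : ℝ) => g x t) := hg
      exact continuous_parametric_intervalIntegral_of_continuous' this 0 y
    -- pointwise inequality multiplied by the weight
    have step1 : (∫ x in (0:ℝ)..X, a * (E x * (f x y + g x y)))
        ≤ ∫ x in (0:ℝ)..X, a * (E x * (J + a * F x + b * G x)) := by
      apply intervalIntegral.integral_mono_on hX0
      · exact (continuous_const.mul (hEc.mul (hfyc.add hgyc))).intervalIntegrable _ _
      · exact (continuous_const.mul (hEc.mul
          ((continuous_const.add ((continuous_const.mul hFc))).add
            (continuous_const.mul hGc)))).intervalIntegrable _ _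
      · intro x hx
        have hxm : x ∈ Icc (0:ℝ) x₀ := ⟨hx.1, hx.2.trans hXx⟩
        have h := hineq x hxm y hy
        have hEx : 0 ≤ a * E x := by positivity
        calc a * (E x * (f x y + g x y)) = (a * E x) * (f x y + g x y) := by ring
          _ ≤ (a * E x) * (J + a * F x + b * G x) := by
              apply mul_le_mul_of_nonneg_left _ hEx
              simpa [hFdef, hGdef] using h
          _ = a * (E x * (J + a * F x + b * G x)) := by ring
    -- split the right-hand side
    have eqsplit : (∫ x in (0:ℝ)..X, a * (E x * (J + a * F x + b * G x)))
        = J * (∫ x in (0:ℝ)..X, a * E x)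
          + a * (∫ x in (0:ℝ)..X, a * (E x * F x))
          + b * (∫ x in (0:ℝ)..X, a * (E x * G x)) := by
      have h1 : (fun x => a * (E x * (J + a * F x + b * G x)))
          = fun x => J * (a * E x) + (a * (a * (E x * F x)) + b * (a * (E x * G x))) := by
        funext x; ring
      rw [h1]
      rw [intervalIntegral.integral_add, intervalIntegral.integral_add]
      · rw [intervalIntegral.integral_const_mul J (fun x => a * E x),
          intervalIntegral.integral_const_mul a (fun x => a * (E x * F x)),
          intervalIntegral.integral_const_mul b (fun x => a * (E x * G x))]
        ring
      · exact (continuous_const.mul (continuous_const.mul (hEc.mul hFc))).intervalIntegrable _ _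
      · exact (continuous_const.mul (continuous_const.mul (hEc.mul hGc))).intervalIntegrable _ _
      · exact (continuous_const.mul (continuous_const.mul hEc)).intervalIntegrable _ _
      · exact ((continuous_const.mul (continuous_const.mul (hEc.mul hFc))).add
          (continuous_const.mul (continuous_const.mul (hEc.mul hGc)))).intervalIntegrable _ _
    -- ∫ a E = e^{aX} - 1
    have eqJ : (∫ x in (0:ℝ)..X, a * E x) = Real.exp (a * X) - 1 := by
      have hder : ∀ x ∈ uIcc (0:ℝ) X, HasDerivAt (fun u => -E u) (a * E x) x := by
        intro x _
        have h1 : HasDerivAt (fun u : ℝ => a * (X - u)) (-a) x := by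
          have := ((hasDerivAt_id x).const_sub X).const_mul a
          simpa using this
        have h2 := h1.exp
        have h3 := h2.neg
        have h4 : HasDerivAt (fun u => -E u) (-(Real.exp (a * (X - x)) * -a)) x := h3
        convert h4 using 1
        show a * Real.exp (a * (X - x)) = -(Real.exp (a * (X - x)) * -a)
        ring
      rw [intervalIntegral.integral_eq_sub_of_hasDerivAt hder
        ((continuous_const.mul hEc).intervalIntegrable _ _)]
      simp only [hEdef, sub_self, mul_zero, Real.exp_zero, sub_zero]
      ring
    -- integration by parts
    have eqF : (∫ x in (0:ℝ)..X, a * (E x * F x))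
        = (∫ x in (0:ℝ)..X, E x * f x y) - F X := by
      have hu : ∀ x ∈ uIcc (0:ℝ) X, HasDerivAt F (f x y) x := fun x _ =>
        (hfyc.integral_hasStrictDerivAt 0 x).hasDerivAt
      have hv' : ∀ x ∈ uIcc (0:ℝ) X, HasDerivAt (fun u => -E u) (a * E x) x := by
        intro x _
        have h1 : HasDerivAt (fun u : ℝ => a * (X - u)) (-a) x := by
          have := ((hasDerivAt_id x).const_sub X).const_mul a
          simpa using this
        have h3 := h1.exp.neg
        have h4 : HasDerivAt (fun u => -E u) (-(Real.exp (a * (X - x)) * -a)) x := h3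
        convert h4 using 1
        show a * Real.exp (a * (X - x)) = -(Real.exp (a * (X - x)) * -a)
        ring
      have ibp := intervalIntegral.integral_mul_deriv_eq_deriv_mul hu hv'
        (hfyc.intervalIntegrable _ _) ((continuous_const.mul hEc).intervalIntegrable _ _)
      -- ibp : ∫ x in 0..X, F x * (a * E x) = F X * (-E X) - F 0 * (-E 0) - ∫ x in 0..X, f x y * (-E x)
      have hF0 : F 0 = 0 := intervalIntegral.integral_same
      have hEX : E X = 1 := by simp [hEdef]
      have e1 : (∫ x in (0:ℝ)..X, a * (E x * F x)) = ∫ x in (0:ℝ)..X, F x * (a * E x) := by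
        apply intervalIntegral.integral_congr; intro x _; ring
      have e2 : (∫ x in (0:ℝ)..X, f x y * -E x) = -(∫ x in (0:ℝ)..X, E x * f x y) := by
        rw [← intervalIntegral.integral_neg]
        apply intervalIntegral.integral_congr; intro x _; ring
      rw [e1, ibp, hF0, hEX, e2]
      ring
    -- Fubini step
    have eqG : (∫ x in (0:ℝ)..X, a * (E x * G x))
        = (∫ t in (0:ℝ)..y, v t) - (∫ t in (0:ℝ)..y, g X t) := by
      have e1 : (∫ x in (0:ℝ)..X, a * (E x * G x))
          = ∫ x in (0:ℝ)..X, ∫ t in (0:ℝ)..y, a * (E x * g x t) := by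
        apply intervalIntegral.integral_congr; intro x _
        show a * (E x * G x) = ∫ t in (0:ℝ)..y, a * (E x * g x t)
        have e0 : (∫ t in (0:ℝ)..y, a * (E x * g x t))
            = (a * E x) * ∫ t in (0:ℝ)..y, g x t := by
          rw [← intervalIntegral.integral_const_mul]
          apply intervalIntegral.integral_congr; intro t _; ring
        rw [e0]
        simp only [hGdef]; ring
      have hcont : Continuous fun p : ℝ × ℝ => a * (E p.1 * g p.1 p.2) :=
        continuous_const.mul ((hEc.comp continuous_fst).mul hg)
      have e2 := tvg_swap (F := fun x t => a * (E x * g x t)) hcont hX0 hy.1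
      have e3 : (∫ t in (0:ℝ)..y, ∫ x in (0:ℝ)..X, a * (E x * g x t))
          = ∫ t in (0:ℝ)..y, (v t - g X t) := by
        apply intervalIntegral.integral_congr; intro t _
        simp only [hvdef]; ring
      rw [e1, e2, e3, intervalIntegral.integral_sub]
      · exact hvc.intervalIntegrable _ _
      · exact hgXc.intervalIntegrable _ _
    -- the hypothesis at (X, y)
    have h1 : f X y + g X y ≤ J + a * F X + b * G X := by
      simpa [hFdef, hGdef] using hineq X ⟨hX0, hXx⟩ y hy
    -- split the left-hand side of step1
    have eqsplitL : (∫ x in (0:ℝ)..X, a * (E x * (f x y + g x y)))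
        = (∫ x in (0:ℝ)..X, a * (E x * f x y)) + ∫ x in (0:ℝ)..X, a * (E x * g x y) := by
      rw [← intervalIntegral.integral_add]
      · apply intervalIntegral.integral_congr; intro x _; ring
      · exact (continuous_const.mul (hEc.mul hfyc)).intervalIntegrable _ _
      · exact (continuous_const.mul (hEc.mul hgyc)).intervalIntegrable _ _
    have eqIf : (∫ x in (0:ℝ)..X, a * (E x * f x y)) = a * ∫ x in (0:ℝ)..X, E x * f x y :=
      intervalIntegral.integral_const_mul a _
    have hvy : v y = g X y + ∫ x in (0:ℝ)..X, a * (E x * g x y) := rfl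
    have hGXy : G X = ∫ t in (0:ℝ)..y, g X t := rfl
    rw [eqJ, eqF, eqG] at eqsplit
    rw [hGXy] at h1
    calc f X y + v y
        = (f X y + g X y) + ∫ x in (0:ℝ)..X, a * (E x * g x y) := by rw [hvy]; ring
      _ ≤ (J + a * F X + b * ∫ t in (0:ℝ)..y, g X t)
            + ∫ x in (0:ℝ)..X, a * (E x * g x y) := by linarith
      _ ≤ (J + a * F X + b * ∫ t in (0:ℝ)..y, g X t)
            + ((∫ x in (0:ℝ)..X, a * (E x * (J + a * F x + b * G x)))
              - ∫ x in (0:ℝ)..X, a * (E x * f x y)) := by linarith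
      _ = J * Real.exp (a * X) + b * ∫ t in (0:ℝ)..y, v t := by
            rw [eqsplit, eqIf]; ring
  -- 1-D Grönwall for W y = ∫₀ʸ v
  set K := J * Real.exp (a * X) with hKdef
  have hK0 : 0 ≤ K := by positivity
  set W : ℝ → ℝ := fun y => ∫ t in (0:ℝ)..y, v t with hWdef
  have hWc : ContinuousOn W (Icc 0 Y) :=
    (intervalIntegral.continuous_primitive (fun _ _ => hvc.intervalIntegrable _ _) 0).continuousOn
  have hW' : ∀ t ∈ Ico (0:ℝ) Y, HasDerivWithinAt W (v t) (Ici t) t := fun t _ =>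
    ((hvc.integral_hasStrictDerivAt 0 t).hasDerivAt).hasDerivWithinAt
  have hWnn : ∀ t, 0 ≤ t → 0 ≤ W t := fun t ht =>
    intervalIntegral.integral_nonneg ht (fun u _ => hv0 u)
  have hbound : ∀ t ∈ Ico (0:ℝ) Y, ‖v t‖ ≤ b * ‖W t‖ + K := by
    intro t ht
    have htm : t ∈ Icc (0:ℝ) y₀ := ⟨ht.1, ht.2.le.trans hYy⟩
    have hc := claim1 t htm
    have hft := hf0 X t
    rw [Real.norm_of_nonneg (hv0 t), Real.norm_of_nonneg (hWnn t ht.1)]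
    simp only [hWdef] at *
    linarith
  have hW0 : ‖W 0‖ ≤ 0 := by simp [hWdef]
  have gr := norm_le_gronwallBound_of_norm_deriv_right_le hWc hW' hW0 hbound Y ⟨hY0, le_refl Y⟩
  rw [Real.norm_of_nonneg (hWnn Y hY0), sub_zero] at gr
  have hcY := claim1 Y ⟨hY0, hYy⟩
  have hgv : g X Y ≤ v Y := by
    have : 0 ≤ ∫ x in (0:ℝ)..X, a * (E x * g x Y) :=
      intervalIntegral.integral_nonneg hX0
        (fun x _ => mul_nonneg ha (mul_nonneg (hE0 x).le (hg0 x Y)))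
    simp only [hvdef]; linarith
  have hfin : K + b * W Y ≤ K * Real.exp (b * Y) := by
    rcases eq_or_ne b 0 with hb0 | hb0
    · simp [hb0]
    · have hgb : gronwallBound 0 b K Y = 0 * Real.exp (b * Y) + K / b * (Real.exp (b * Y) - 1) := by
        rw [gronwallBound_of_K_ne_0 hb0]
      have hbW : b * W Y ≤ b * gronwallBound 0 b K Y :=
        mul_le_mul_of_nonneg_left gr hb
      rw [hgb] at hbW
      have : b * (0 * Real.exp (b * Y) + K / b * (Real.exp (b * Y) - 1))
          = K * (Real.exp (b * Y) - 1) := by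
        field_simp
        ring
      rw [this] at hbW
      linarith
  have : f X Y + g X Y ≤ K + b * W Y := by
    simp only [hWdef] at hcY ⊢
    linarith
  calc f X Y + g X Y ≤ K * Real.exp (b * Y) := le_trans this hfin
    _ = J * Real.exp (a * X + b * Y) := by
        rw [hKdef, Real.exp_add]; ring

theorem two_variable_gronwall
    (x₀ y₀ J c₁ c₂ : ℝ) (hx₀ : 0 ≤ x₀) (hy₀ : 0 ≤ y₀)
    (hJ : 0 ≤ J) (hc₁ : 0 ≤ c₁) (hc₂ : 0 ≤ c₂)
    (f g : ℝ → ℝ → ℝ)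
    (hf : ContinuousOn (fun p : ℝ × ℝ => f p.1 p.2) (Icc 0 x₀ ×ˢ Icc 0 y₀))
    (hg : ContinuousOn (fun p : ℝ × ℝ => g p.1 p.2) (Icc 0 x₀ ×ˢ Icc 0 y₀))
    (hf0 : ∀ x ∈ Icc (0:ℝ) x₀, ∀ y ∈ Icc (0:ℝ) y₀, 0 ≤ f x y)
    (hg0 : ∀ x ∈ Icc (0:ℝ) x₀, ∀ y ∈ Icc (0:ℝ) y₀, 0 ≤ g x y)
    (hineq : ∀ x ∈ Icc (0:ℝ) x₀, ∀ y ∈ Icc (0:ℝ) y₀,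
      f x y + g x y ≤ J + c₁ * (∫ x' in (0:ℝ)..x, f x' y) + c₂ * (∫ y' in (0:ℝ)..y, g x y')) :
    ∀ x ∈ Icc (0:ℝ) x₀, ∀ y ∈ Icc (0:ℝ) y₀,
      f x y + g x y ≤ J * Real.exp (c₁ * x + c₂ * y) := by
  -- clamp to the rectangle to get globally continuous functions
  set cx : ℝ → ℝ := fun x => max 0 (min x x₀) with hcxdef
  set cy : ℝ → ℝ := fun y => max 0 (min y y₀) with hcydef
  have hcxc : Continuous cx := continuous_const.max (continuous_id.min continuous_const)
  have hcyc : Continuous cy := continuous_const.max (continuous_id.min continuous_const)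
  have hcxm : ∀ x, cx x ∈ Icc (0:ℝ) x₀ := fun x =>
    ⟨le_max_left _ _, max_le hx₀ (min_le_right _ _)⟩
  have hcym : ∀ y, cy y ∈ Icc (0:ℝ) y₀ := fun y =>
    ⟨le_max_left _ _, max_le hy₀ (min_le_right _ _)⟩
  have hcxid : ∀ x ∈ Icc (0:ℝ) x₀, cx x = x := fun x hx => by
    simp only [hcxdef]; rw [min_eq_left hx.2, max_eq_right hx.1]
  have hcyid : ∀ y ∈ Icc (0:ℝ) y₀, cy y = y := fun y hy => by
    simp only [hcydef]; rw [min_eq_left hy.2, max_eq_right hy.1]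
  set f' : ℝ → ℝ → ℝ := fun x y => f (cx x) (cy y) with hf'def
  set g' : ℝ → ℝ → ℝ := fun x y => g (cx x) (cy y) with hg'def
  have hf'c : Continuous fun p : ℝ × ℝ => f' p.1 p.2 := by
    have : Continuous fun p : ℝ × ℝ => (cx p.1, cy p.2) :=
      (hcxc.comp continuous_fst).prodMk (hcyc.comp continuous_snd)
    exact hf.comp_continuous this (fun p => mk_mem_prod (hcxm p.1) (hcym p.2))
  have hg'c : Continuous fun p : ℝ × ℝ => g' p.1 p.2 := by
    have : Continuous fun p : ℝ × ℝ => (cx p.1, cy p.2) :=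
      (hcxc.comp continuous_fst).prodMk (hcyc.comp continuous_snd)
    exact hg.comp_continuous this (fun p => mk_mem_prod (hcxm p.1) (hcym p.2))
  have hf'0 : ∀ x y, 0 ≤ f' x y := fun x y => hf0 _ (hcxm x) _ (hcym y)
  have hg'0 : ∀ x y, 0 ≤ g' x y := fun x y => hg0 _ (hcxm x) _ (hcym y)
  have heqf : ∀ x ∈ Icc (0:ℝ) x₀, ∀ y ∈ Icc (0:ℝ) y₀, f' x y = f x y := fun x hx y hy => by
    simp only [hf'def, hcxid x hx, hcyid y hy]
  have heqg : ∀ x ∈ Icc (0:ℝ) x₀, ∀ y ∈ Icc (0:ℝ) y₀, g' x y = g x y := fun x hx y hy => by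
    simp only [hg'def, hcxid x hx, hcyid y hy]
  have hineq' : ∀ x ∈ Icc (0:ℝ) x₀, ∀ y ∈ Icc (0:ℝ) y₀,
      f' x y + g' x y ≤ J + c₁ * (∫ x' in (0:ℝ)..x, f' x' y) + c₂ * (∫ y' in (0:ℝ)..y, g' x y') := by
    intro x hx y hy
    have e1 : (∫ x' in (0:ℝ)..x, f' x' y) = ∫ x' in (0:ℝ)..x, f x' y := by
      apply intervalIntegral.integral_congr
      intro s hs
      rw [uIcc_of_le hx.1] at hs
      exact heqf s ⟨hs.1, hs.2.trans hx.2⟩ y hy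
    have e2 : (∫ y' in (0:ℝ)..y, g' x y') = ∫ y' in (0:ℝ)..y, g x y' := by
      apply intervalIntegral.integral_congr
      intro t ht
      rw [uIcc_of_le hy.1] at ht
      exact heqg x hx t ⟨ht.1, ht.2.trans hy.2⟩
    rw [heqf x hx y hy, heqg x hx y hy, e1, e2]
    exact hineq x hx y hy
  intro x hx y hy
  have := tvg_aux x₀ y₀ J c₁ c₂ hx₀ hy₀ hJ hc₁ hc₂ f' g' hf'c hg'c hf'0 hg'0 hineq' x hx y hy
  rwa [heqf x hx y hy, heqg x hx y hy] at this
end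

section
/- Square-root Grönwall (transport estimate): let y : [a,b] → ℝ be differentiable and nonnegative, and let h : [a,b] → ℝ be continuous and nonnegative. If y'(t) ≤ 2 h(t) √(y(t)) for all t ∈ [a,b], then √(y(b)) ≤ √(y(a)) + ∫ₐᵇ h(t) dt. -/
/-!
For `ε > 0` the function `√(y + ε)` is differentiable with derivative `y' / (2 √(y + ε))`, and the
hypothesis together with `√y ≤ √(y + ε)` and `h ≥ 0` bounds this derivative by `h`. Integrating
gives `√(y b + ε) - √(y a + ε) ≤ ∫ₐᵇ h`, and letting `ε → 0⁺` gives the claim. The shift by `ε`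
avoids the point where `√` fails to be differentiable.
-/

open Real Set Filter Topology MeasureTheory intervalIntegral

lemma div_two_mul_sqrt_add_le {d c y ε : ℝ} (hc : 0 ≤ c) (hy : 0 ≤ y) (hε : 0 < ε)
    (hd : d ≤ 2 * c * √y) : d / (2 * √(y + ε)) ≤ c := by
  have hpos : 0 < √(y + ε) := sqrt_pos.mpr (by linarith)
  rw [div_le_iff₀ (by positivity)]
  calc d ≤ 2 * c * √y := hd
    _ ≤ 2 * c * √(y + ε) := by gcongr; linarith
    _ = c * (2 * √(y + ε)) := by ring

lemma sqrt_add_sub_sqrt_add_le_integral {a b ε : ℝ} {y y' h : ℝ → ℝ} (hab : a ≤ b) (hε : 0 < ε)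
    (hyc : ContinuousOn y (Icc a b)) (hy : ∀ t ∈ Ioo a b, HasDerivAt y (y' t) t)
    (hy0 : ∀ t ∈ Ioo a b, 0 ≤ y t) (hh : IntegrableOn h (Icc a b))
    (hh0 : ∀ t ∈ Ioo a b, 0 ≤ h t) (hineq : ∀ t ∈ Ioo a b, y' t ≤ 2 * h t * √(y t)) :
    √(y b + ε) - √(y a + ε) ≤ ∫ t in a..b, h t := by
  refine sub_le_integral_of_hasDeriv_right_of_le hab (hyc.add continuousOn_const).sqrt
    (fun t ht => ?_) hh
    (fun t ht => div_two_mul_sqrt_add_le (hh0 t ht) (hy0 t ht) hε (hineq t ht))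
  have hne : y t + ε ≠ 0 := by linarith [hy0 t ht]
  exact (((hy t ht).add_const ε).sqrt hne).hasDerivWithinAt

lemma sqrt_sub_sqrt_le_integral {a b : ℝ} {y y' h : ℝ → ℝ} (hab : a ≤ b)
    (hyc : ContinuousOn y (Icc a b)) (hy : ∀ t ∈ Ioo a b, HasDerivAt y (y' t) t)
    (hy0 : ∀ t ∈ Ioo a b, 0 ≤ y t) (hh : IntegrableOn h (Icc a b))
    (hh0 : ∀ t ∈ Ioo a b, 0 ≤ h t) (hineq : ∀ t ∈ Ioo a b, y' t ≤ 2 * h t * √(y t)) :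
    √(y b) - √(y a) ≤ ∫ t in a..b, h t := by
  have hlim : Tendsto (fun ε => √(y b + ε) - √(y a + ε)) (𝓝[>] 0) (𝓝 (√(y b) - √(y a))) := by
    have hcont : Continuous fun ε => √(y b + ε) - √(y a + ε) := by fun_prop
    simpa using hcont.tendsto 0 |>.mono_left nhdsWithin_le_nhds
  exact le_of_tendsto hlim <| eventually_nhdsWithin_of_forall fun ε hε =>
    sqrt_add_sub_sqrt_add_le_integral hab hε hyc hy hy0 hh hh0 hineq

theorem sqrt_gronwall (a b : ℝ) (hab : a ≤ b)
    (y y' h : ℝ → ℝ)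
    (hy : ∀ t ∈ Set.Icc a b, HasDerivAt y (y' t) t)
    (hy0 : ∀ t ∈ Set.Icc a b, 0 ≤ y t)
    (hh : ContinuousOn h (Set.Icc a b))
    (hh0 : ∀ t ∈ Set.Icc a b, 0 ≤ h t)
    (hineq : ∀ t ∈ Set.Icc a b, y' t ≤ 2 * h t * Real.sqrt (y t)) :
    Real.sqrt (y b) ≤ Real.sqrt (y a) + ∫ t in a..b, h t := by
  have hyc : ContinuousOn y (Icc a b) := fun t ht => (hy t ht).continuousAt.continuousWithinAt
  have key := sqrt_sub_sqrt_le_integral hab hyc (fun t ht => hy t (Ioo_subset_Icc_self ht))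
    (fun t ht => hy0 t (Ioo_subset_Icc_self ht)) (hh.integrableOn_compact isCompact_Icc)
    (fun t ht => hh0 t (Ioo_subset_Icc_self ht)) (fun t ht => hineq t (Ioo_subset_Icc_self ht))
  linarith
end

section
/- Exponentially weighted transport estimate: let 0 < r ≤ R, λ ≥ 0, and let y : [r,R] → ℝ be differentiable and nonnegative with y'(s) ≥ −(2λ/s)·y(s) − 2·√(y(s))·h(s) for all s ∈ [r,R], where h : [r,R] → ℝ is continuous and nonnegative. Then r^{λ}·√(y(r)) ≤ R^{λ}·√(y(R)) + ∫_r^R s^{λ} h(s) ds. -/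
set_option maxHeartbeats 1000000

theorem weighted_transport (r R lam : ℝ) (hr : 0 < r) (hrR : r ≤ R) (hlam : 0 ≤ lam)
    (y y' h : ℝ → ℝ)
    (hy : ∀ s ∈ Set.Icc r R, HasDerivAt y (y' s) s)
    (hy0 : ∀ s ∈ Set.Icc r R, 0 ≤ y s)
    (hh : ContinuousOn h (Set.Icc r R))
    (hh0 : ∀ s ∈ Set.Icc r R, 0 ≤ h s)
    (hineq : ∀ s ∈ Set.Icc r R, -(2 * lam / s) * y s - 2 * Real.sqrt (y s) * h s ≤ y' s) :
    r ^ lam * Real.sqrt (y r) ≤ R ^ lam * Real.sqrt (y R) + ∫ s in r..R, s ^ lam * h s := by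
  have hφcont : ContinuousOn (fun t : ℝ => t ^ lam * h t) (Set.Icc r R) := by
    apply ContinuousOn.mul _ hh
    intro x hx
    exact (Real.continuousAt_rpow_const x lam
      (Or.inl (ne_of_gt (lt_of_lt_of_le hr hx.1)))).continuousWithinAt
  have key : ∀ ε : ℝ, 0 < ε → r ^ lam * Real.sqrt (y r + ε) ≤
      R ^ lam * Real.sqrt (y R + ε) + ∫ s in r..R, s ^ lam * h s := by
    intro ε hε
    set F : ℝ → ℝ := fun s => s ^ lam * Real.sqrt (y s + ε)
      + ∫ t in r..s, t ^ lam * h t with hFdef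
    -- continuity of F on Icc r R
    have hycont : ContinuousOn y (Set.Icc r R) := fun x hx =>
      ((hy x hx).continuousAt).continuousWithinAt
    have hFcont : ContinuousOn F (Set.Icc r R) := by
      apply ContinuousOn.add
      · apply ContinuousOn.mul
        · intro x hx
          exact (Real.continuousAt_rpow_const x lam
            (Or.inl (ne_of_gt (lt_of_lt_of_le hr hx.1)))).continuousWithinAt
        · exact Real.continuous_sqrt.comp_continuousOn (hycont.add continuousOn_const)
      · have hint : IntervalIntegrable (fun t : ℝ => t ^ lam * h t) MeasureTheory.volume r R :=
          (hφcont.mono (by rw [Set.uIcc_of_le hrR])).intervalIntegrable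
        have := intervalIntegral.continuousOn_primitive_interval' hint Set.left_mem_uIcc
        rwa [Set.uIcc_of_le hrR] at this
    -- derivative on the interior
    have hderiv : ∀ x ∈ interior (Set.Icc r R),
        HasDerivAt F (lam * x ^ (lam - 1) * Real.sqrt (y x + ε)
          + x ^ lam * (y' x / (2 * Real.sqrt (y x + ε))) + x ^ lam * h x) x := by
      intro x hx
      rw [interior_Icc] at hx
      have hxI : x ∈ Set.Icc r R := ⟨le_of_lt hx.1, le_of_lt hx.2⟩
      have hxpos : 0 < x := lt_of_lt_of_le hr hxI.1
      have hyεpos : 0 < y x + ε := add_pos_of_nonneg_of_pos (hy0 x hxI) hε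
      have hsq : HasDerivAt (fun s => Real.sqrt (y s + ε))
          (y' x / (2 * Real.sqrt (y x + ε))) x := by
        have h1 := (Real.hasDerivAt_sqrt (ne_of_gt hyεpos)).comp x ((hy x hxI).add_const ε)
        rw [show y' x / (2 * Real.sqrt (y x + ε)) = 1 / (2 * Real.sqrt (y x + ε)) * y' x by ring]
        exact h1
      have hpow : HasDerivAt (fun s : ℝ => s ^ lam) (lam * x ^ (lam - 1)) x :=
        Real.hasDerivAt_rpow_const (Or.inl (ne_of_gt hxpos))
      have hprod := hpow.mul hsq
      have hint : HasDerivAt (fun s => ∫ t in r..s, t ^ lam * h t) (x ^ lam * h x) x := by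
        apply intervalIntegral.integral_hasDerivAt_right
        · refine (hφcont.mono ?_).intervalIntegrable
          rw [Set.uIcc_of_le hxI.1]
          exact Set.Icc_subset_Icc_right hxI.2
        · exact ⟨Set.Icc r R, Icc_mem_nhds hx.1 hx.2,
            hφcont.aestronglyMeasurable measurableSet_Icc⟩
        · exact hφcont.continuousAt (Icc_mem_nhds hx.1 hx.2)
      exact hprod.add hint
    -- nonnegativity of the derivative
    have hnonneg : ∀ x ∈ interior (Set.Icc r R),
        0 ≤ lam * x ^ (lam - 1) * Real.sqrt (y x + ε)
          + x ^ lam * (y' x / (2 * Real.sqrt (y x + ε))) + x ^ lam * h x := by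
      intro x hx
      rw [interior_Icc] at hx
      have hxI : x ∈ Set.Icc r R := ⟨le_of_lt hx.1, le_of_lt hx.2⟩
      have hxpos : 0 < x := lt_of_lt_of_le hr hxI.1
      have hy0x : 0 ≤ y x := hy0 x hxI
      have hyεpos : 0 < y x + ε := add_pos_of_nonneg_of_pos hy0x hε
      have hhx : 0 ≤ h x := hh0 x hxI
      have hy'x := hineq x hxI
      set w := Real.sqrt (y x + ε) with hw
      set v := Real.sqrt (y x) with hv
      set A := x ^ lam with hA'
      set B := x ^ (lam - 1) with hB'
      have hwpos : 0 < w := Real.sqrt_pos.mpr hyεpos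
      have hw2 : w ^ 2 = y x + ε := Real.sq_sqrt (le_of_lt hyεpos)
      have hv2 : v ^ 2 = y x := Real.sq_sqrt hy0x
      have hv0 : 0 ≤ v := Real.sqrt_nonneg _
      have hvw : v ≤ w := Real.sqrt_le_sqrt (by linarith)
      have hA : (0:ℝ) < A := Real.rpow_pos_of_pos hxpos lam
      have hB : (0:ℝ) < B := Real.rpow_pos_of_pos hxpos _
      have hAB : A = B * x := by
        rw [hA', hB', Real.rpow_sub_one (ne_of_gt hxpos)]
        field_simp
      have h1' : -(2 * lam * B) * y x - 2 * A * v * h x ≤ A * y' x := by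
        calc -(2 * lam * B) * y x - 2 * A * v * h x
            = A * (-(2 * lam / x) * y x - 2 * v * h x) := by
              rw [hAB]; field_simp
          _ ≤ A * y' x := mul_le_mul_of_nonneg_left hy'x hA.le
      have hkey2 : 0 ≤ 2 * lam * B * w ^ 2 + A * y' x + 2 * A * h x * w := by
        nlinarith [mul_nonneg (mul_nonneg hA.le hhx) (sub_nonneg.mpr hvw),
          mul_nonneg (mul_nonneg hlam hB.le) hε.le]
      have heq : lam * B * w + A * (y' x / (2 * w)) + A * h x
          = (2 * lam * B * w ^ 2 + A * y' x + 2 * A * h x * w) / (2 * w) := by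
        field_simp
      rw [heq]
      exact div_nonneg hkey2 (by linarith)
    have hmono : MonotoneOn F (Set.Icc r R) :=
      monotoneOn_of_hasDerivWithinAt_nonneg (convex_Icc r R) hFcont
        (fun x hx => (hderiv x hx).hasDerivWithinAt) hnonneg
    have := hmono ⟨le_refl r, hrR⟩ ⟨hrR, le_refl R⟩ hrR
    simpa [hFdef, intervalIntegral.integral_same] using this
  -- take the limit ε → 0⁺
  have htend : Filter.Tendsto
      (fun ε => R ^ lam * Real.sqrt (y R + ε) + ∫ s in r..R, s ^ lam * h s)
      (nhdsWithin 0 (Set.Ioi 0))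
      (nhds (R ^ lam * Real.sqrt (y R) + ∫ s in r..R, s ^ lam * h s)) := by
    apply Filter.Tendsto.mono_left _ nhdsWithin_le_nhds
    have hc : Continuous fun ε : ℝ =>
        R ^ lam * Real.sqrt (y R + ε) + (∫ s in r..R, s ^ lam * h s) := by
      exact (continuous_const.mul (Real.continuous_sqrt.comp
        (continuous_const.add continuous_id))).add continuous_const
    simpa using hc.tendsto 0
  refine ge_of_tendsto htend ?_
  filter_upwards [self_mem_nhdsWithin] with ε hε
  calc r ^ lam * Real.sqrt (y r) ≤ r ^ lam * Real.sqrt (y r + ε) := by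
        apply mul_le_mul_of_nonneg_left (Real.sqrt_le_sqrt (by linarith [Set.mem_Ioi.mp hε]))
          (le_of_lt (Real.rpow_pos_of_pos hr lam))
    _ ≤ _ := key ε (Set.mem_Ioi.mp hε)
end
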